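/- For any vector p ∈ ℝ³ with p ≠ 0, the matrix exponential of the hat map of p equals I + (sin‖p‖/‖p‖)·p̂ + ((1−cos‖p‖)/‖p‖²)·p̂², where p̂ is the skew-symmetric matrix associated to p (Rodrigues' formula). -/

import Mathlib

open Matrix Real
noncomputable section

def hat (p : EuclideanSpace ℝ (Fin 3)) : Matrix (Fin 3) (Fin 3) ℝ :=
  !![0, -p 2, p 1; p 2, 0, -p 0; -p 1, p 0, 0]

/-!
Since `p̂³ = -‖p‖² p̂`, every odd power of `p̂` is a real multiple of `p̂` and every even power
beyond the zeroth a real multiple of `p̂²`. The exponential series therefore splits into its odd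
part, the sine series in `‖p‖` divided by `‖p‖`, and its even part, `1` plus the tail of the
cosine series divided by `-‖p‖²`.
-/

open Nat

section CubeRelation

variable {𝔸 : Type*} [Ring 𝔸] [Algebra ℝ 𝔸] {A : 𝔸} {θ : ℝ}

theorem pow_two_mul_add_one_of_pow_three_eq (h : A ^ 3 = -θ ^ 2 • A) (k : ℕ) :
    A ^ (2 * k + 1) = (-θ ^ 2) ^ k • A := by
  induction k with
  | zero => simp
  | succ k ih =>
    rw [show 2 * (k + 1) + 1 = 2 + (2 * k + 1) by ring, pow_add, ih, mul_smul_comm, ← pow_succ A 2,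
      h, smul_smul, ← pow_succ]

theorem pow_two_mul_add_two_of_pow_three_eq (h : A ^ 3 = -θ ^ 2 • A) (k : ℕ) :
    A ^ (2 * k + 2) = (-θ ^ 2) ^ k • A ^ 2 := by
  rw [pow_succ, pow_two_mul_add_one_of_pow_three_eq h, smul_mul_assoc, sq A]

variable [TopologicalSpace 𝔸] [ContinuousSMul ℝ 𝔸]

theorem hasSum_expSeries_odd_of_pow_three_eq (h : A ^ 3 = -θ ^ 2 • A) (hθ : θ ≠ 0) :
    HasSum (fun k => ((2 * k + 1)! : ℝ)⁻¹ • A ^ (2 * k + 1)) ((sin θ / θ) • A) := by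
  convert ((Real.hasSum_sin θ).div_const θ).smul_const A using 2 with k
  rw [pow_two_mul_add_one_of_pow_three_eq h, smul_smul, neg_pow, ← pow_mul]
  congr 1
  field_simp
  ring

variable [IsTopologicalRing 𝔸]

theorem hasSum_expSeries_even_of_pow_three_eq (h : A ^ 3 = -θ ^ 2 • A) (hθ : θ ≠ 0) :
    HasSum (fun k => ((2 * k)! : ℝ)⁻¹ • A ^ (2 * k)) (1 + ((1 - cos θ) / θ ^ 2) • A ^ 2) := by
  have hcos_tail : HasSum (fun k : ℕ => (-1) ^ (k + 1) * θ ^ (2 * (k + 1)) / (2 * (k + 1))!)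
      (cos θ - 1) := by
    simpa using (hasSum_nat_add_iff' 1).mpr (Real.hasSum_cos θ)
  have htail : HasSum (fun k => ((2 * (k + 1))! : ℝ)⁻¹ • A ^ (2 * (k + 1)))
      (((1 - cos θ) / θ ^ 2) • A ^ 2) := by
    convert ((hcos_tail.neg.div_const (θ ^ 2)).smul_const (A ^ 2)) using 2 with k
    · rw [mul_add_one, pow_two_mul_add_two_of_pow_three_eq h, smul_smul, neg_pow, ← pow_mul]
      congr 1
      field_simp
      ring
    · ring
  simpa using htail.zero_add (f := fun k => ((2 * k)! : ℝ)⁻¹ • A ^ (2 * k))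

variable [T2Space 𝔸]

theorem exp_eq_of_pow_three_eq (h : A ^ 3 = -θ ^ 2 • A) (hθ : θ ≠ 0) :
    NormedSpace.exp A = 1 + (sin θ / θ) • A + ((1 - cos θ) / θ ^ 2) • A ^ 2 := by
  rw [NormedSpace.exp_eq_tsum ℝ, add_right_comm]
  exact (HasSum.even_add_odd (f := fun n => (n ! : ℝ)⁻¹ • A ^ n)
    (hasSum_expSeries_even_of_pow_three_eq h hθ) (hasSum_expSeries_odd_of_pow_three_eq h hθ)).tsum_eq

end CubeRelation

theorem hat_pow_three (p : EuclideanSpace ℝ (Fin 3)) : hat p ^ 3 = -‖p‖ ^ 2 • hat p := by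
  rw [EuclideanSpace.norm_eq, Real.sq_sqrt (by positivity)]
  ext i j
  simp only [Fin.sum_univ_three, Real.norm_eq_abs, pow_succ, pow_zero, one_mul]
  fin_cases i <;> fin_cases j <;>
    simp [hat, Matrix.mul_apply, Fin.sum_univ_three] <;> ring

theorem rodrigues_formula (p : EuclideanSpace ℝ (Fin 3)) (hp : p ≠ 0) :
    NormedSpace.exp (hat p) =
      1 + (Real.sin ‖p‖ / ‖p‖) • hat p
        + ((1 - Real.cos ‖p‖) / ‖p‖ ^ 2) • (hat p * hat p) := by
  rw [← sq]
  exact exp_eq_of_pow_three_eq (hat_pow_three p) (norm_ne_zero_iff.mpr hp)
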